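/- arXiv:2601.20779 — 4 statements merged into one kernel-verified Lean document; each statement's English description precedes it below -/
import Mathlib

section
/- In every preference profile over a set of m ≥ 2 candidates with n ≥ 1 voters, there exists a pair of distinct candidates {x,y} whose deletion-clone value satisfies α_{x,y} ≤ (m−2)/m. -/
/-!
Call a pair of candidates far for a voter if the voter ranks them more than one place apart.
Of the `m (m - 1)` ordered pairs of distinct candidates, each voter ranks at most
`(m - 1) (m - 2)` far apart, since the `2 (m - 1)` pairs in adjacent positions are not far.
Summing over voters and averaging over pairs, some pair is far for at most a fraction
`(m - 2) / m` of the voters.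
-/

open Finset

theorem Finset.exists_mem_card_filter_mul_card_le {ι α : Type*} [Fintype ι]
    (R : ι → α → Prop) [∀ i a, Decidable (R i a)] {s : Finset α} (hs : s.Nonempty) (b : ℕ)
    (hb : ∀ i, #{a ∈ s | R i a} ≤ b) :
    ∃ a ∈ s, #{i | R i a} * #s ≤ Fintype.card ι * b := by
  apply exists_le_of_sum_le hs
  have double_count : ∑ a ∈ s, #{i | R i a} = ∑ i, #{a ∈ s | R i a} := by
    simp only [card_filter]
    exact sum_comm
  calc ∑ a ∈ s, #{i | R i a} * #s
      = (∑ i, #{a ∈ s | R i a}) * #s := by rw [← sum_mul, double_count]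
    _ ≤ (∑ _i : ι, b) * #s := by gcongr with i; exact hb i
    _ = ∑ _a ∈ s, Fintype.card ι * b := by simp [mul_comm]

/-- Pairs with `a < b` land on or above the diagonal of `[0, m - 2) × [0, m - 2)`, pairs with
`a > b + 1` strictly below it in `[0, m - 1) × [0, m - 2)`. -/
theorem Fin.card_filter_one_lt_natAbs_sub_le (m : ℕ) :
    #{p : Fin m × Fin m | 1 < ((p.1 : ℤ) - p.2).natAbs} ≤ (m - 1) * (m - 2) := by
  let f : Fin m × Fin m → ℕ × ℕ := fun p =>
    if p.1 < p.2 then ((p.1 : ℕ), (p.2 : ℕ) - 2) else ((p.1 : ℕ) - 1, (p.2 : ℕ))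
  calc #{p : Fin m × Fin m | 1 < ((p.1 : ℤ) - p.2).natAbs}
      ≤ #(range (m - 1) ×ˢ range (m - 2)) := by
        refine card_le_card_of_injOn f ?_ ?_
        · rintro ⟨a, b⟩ hab
          simp only [coe_filter, Set.mem_ofPred_eq, mem_univ, true_and] at hab
          have := a.isLt; have := b.isLt
          simp only [f, Fin.lt_def, coe_product, coe_range, Set.mem_prod, Set.mem_Iio]
          split_ifs <;> simp only <;> omega
        · rintro ⟨a, b⟩ hab ⟨c, d⟩ hcd hf
          simp only [coe_filter, Set.mem_ofPred_eq, mem_univ, true_and] at hab hcd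
          simp only [f, Fin.lt_def] at hf
          split_ifs at hf <;> simp only [Prod.mk.injEq] at hf <;> ext <;> simp only <;> omega
    _ = (m - 1) * (m - 2) := by simp

theorem Equiv.card_filter_one_lt_natAbs_sub_le {C : Type*} [Fintype C] {m : ℕ} (σ : C ≃ Fin m) :
    #{p : C × C | 1 < ((σ p.1 : ℤ) - σ p.2).natAbs} ≤ (m - 1) * (m - 2) := by
  refine le_trans (card_le_card_of_injOn (σ.prodCongr σ) ?_ (σ.prodCongr σ).injective.injOn)
    (Fin.card_filter_one_lt_natAbs_sub_le m)
  intro p hp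
  simpa using hp

theorem div_le_sub_two_div_of_mul_le {N n m : ℕ} (hm : 2 ≤ m)
    (h : N * (m * m - m) ≤ n * ((m - 1) * (m - 2))) : (N : ℝ) / n ≤ ((m : ℝ) - 2) / m := by
  have hcount : N * m ≤ n * (m - 2) := by
    refine Nat.le_of_mul_le_mul_right (c := m - 1) ?_ (by omega)
    calc N * m * (m - 1) = N * (m * m - m) := by rw [mul_assoc, Nat.mul_sub_one]
      _ ≤ n * ((m - 1) * (m - 2)) := h
      _ = n * (m - 2) * (m - 1) := by ring
  have hcount_real : (N : ℝ) * m ≤ n * ((m : ℝ) - 2) := by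
    rw [← Nat.cast_ofNat, ← Nat.cast_sub hm]
    exact_mod_cast hcount
  have hm0 : (0 : ℝ) < m := by positivity
  refine div_le_of_le_mul₀ n.cast_nonneg (div_nonneg (by simp [hm]) hm0.le) ?_
  rwa [div_mul_eq_mul_div, le_div_iff₀ hm0, mul_comm _ (n : ℝ)]

theorem exists_pair_deletion_clone_le_general
    (C : Type*) [Fintype C] (m n : ℕ)
    (hm : 2 ≤ m) (hC : Fintype.card C = m)
    (P : Fin n → (C ≃ Fin m)) :
    ∃ x y : C, x ≠ y ∧
      ((univ.filter fun i : Fin n =>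
          1 < ((P i x : ℤ) - (P i y : ℤ)).natAbs).card : ℝ) / n ≤ ((m : ℝ) - 2) / m := by
  classical
  have hpairs : (univ : Finset C).offDiag.Nonempty := by
    obtain ⟨x, y, hxy⟩ := Fintype.exists_pair_of_one_lt_card (hC ▸ hm)
    exact ⟨(x, y), by simpa using hxy⟩
  obtain ⟨⟨x, y⟩, hxy, hfew⟩ :=
    exists_mem_card_filter_mul_card_le (fun i p => 1 < ((P i p.1 : ℤ) - P i p.2).natAbs)
      hpairs ((m - 1) * (m - 2)) fun i =>
        (card_le_card (filter_subset_filter _ (subset_univ _))).trans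
          (P i).card_filter_one_lt_natAbs_sub_le
  rw [offDiag_card, card_univ, hC, Fintype.card_fin] at hfew
  exact ⟨x, y, (mem_offDiag.1 hxy).2.2, div_le_sub_two_div_of_mul_le hm hfew⟩

/-- **Existence of a near-clone pair (deletion measure).**
In every preference profile over a set `C` of `m ≥ 2` candidates with `n ≥ 1` voters
(voter `i`'s ranking is given by its position function `P i : C ≃ Fin m`),
there exists a pair of distinct candidates `{x,y}` whose deletion-clone value
`α_{x,y} = (1/n)·|{i : |σ_i(x) − σ_i(y)| > 1}|` is at most `(m-2)/m`. -/
theorem exists_pair_deletion_clone_le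
    (C : Type*) [Fintype C] [DecidableEq C] (m n : ℕ)
    (hm : 2 ≤ m) (hC : Fintype.card C = m) (hn : 1 ≤ n)
    (P : Fin n → (C ≃ Fin m)) :
    ∃ x y : C, x ≠ y ∧
      ((univ.filter fun i : Fin n =>
          1 < ((P i x : ℤ) - (P i y : ℤ)).natAbs).card : ℝ) / n ≤ ((m : ℝ) - 2) / m :=
  exists_pair_deletion_clone_le_general C m n hm hC P
end

section
/- In every preference profile over a set of m ≥ 2 candidates with n ≥ 1 voters, there exists a pair of distinct candidates {x,y} whose swap-clone value satisfies β_{x,y} ≤ (m−2)/3. -/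
open Finset

/-! Average over the ordered pairs of distinct candidates. A ranking is a bijection onto the
positions `0, …, m-1`, so for each voter `∑_{x ≠ y} |σ(x) - σ(y)| = ∑_{p,q < m} |p - q| = (m³ - m)/3`.
There are `m² - m` such pairs, so the mean of `|σ(x) - σ(y)| - 1` over them is
`(m + 1)/3 - 1 = (m - 2)/3`, and some pair does not exceed the mean of the sum over voters. -/

theorem two_mul_sum_range_abs_sub_self (m : ℕ) :
    2 * ∑ p ∈ range m, |(p : ℤ) - m| = m * (m + 1) := by
  induction m with
  | zero => simp
  | succ m ih =>
    rw [sum_range_succ']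
    push_cast
    rw [mul_add]
    simp only [add_sub_add_right_eq_sub]
    rw [ih, abs_of_nonpos (by linarith)]
    ring

theorem three_mul_sum_range_sum_range_abs_sub (m : ℕ) :
    3 * ∑ p ∈ range m, ∑ q ∈ range m, |(p : ℤ) - q| = m ^ 3 - m := by
  induction m with
  | zero => simp
  | succ m ih =>
    have hstep : ∑ p ∈ range (m + 1), ∑ q ∈ range (m + 1), |(p : ℤ) - q|
        = ∑ p ∈ range m, ∑ q ∈ range m, |(p : ℤ) - q| + 2 * ∑ p ∈ range m, |(p : ℤ) - m| := by
      simp only [sum_range_succ, sum_add_distrib, sub_self, abs_zero, add_zero]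
      simp only [abs_sub_comm (m : ℤ)]
      ring
    rw [hstep, mul_add, ih, two_mul_sum_range_abs_sub_self]
    push_cast
    ring

section

variable {C : Type*} [Fintype C] [DecidableEq C] {m : ℕ}

theorem three_mul_sum_offDiag_abs_sub (e : C ≃ Fin m) :
    3 * ∑ p ∈ (univ : Finset C).offDiag, |(e p.1 : ℝ) - e p.2| = m ^ 3 - m := by
  have hdiag : ∑ p ∈ (univ : Finset C).offDiag, |(e p.1 : ℝ) - e p.2|
      = ∑ x, ∑ y, |(e x : ℝ) - e y| := by
    rw [← sum_product', univ_product_univ]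
    refine sum_subset (subset_univ _) fun p _ hp => ?_
    simp_all
  have hfin : ∑ x, ∑ y, |(e x : ℝ) - e y| = ∑ p : Fin m, ∑ q : Fin m, |(p : ℝ) - q| := by
    rw [← e.sum_comp (fun p => ∑ q : Fin m, |(p : ℝ) - q|)]
    exact sum_congr rfl fun x _ => e.sum_comp (fun q => |(e x : ℝ) - q|)
  have hrange (p : ℕ) : ∑ q : Fin m, |(p : ℝ) - q| = ∑ q ∈ range m, |(p : ℝ) - q| :=
    Fin.sum_univ_eq_sum_range (fun q => |(p : ℝ) - q|) m
  rw [hdiag, hfin]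
  simp only [hrange]
  rw [Fin.sum_univ_eq_sum_range (fun p => ∑ q ∈ range m, |(p : ℝ) - q|)]
  exact_mod_cast three_mul_sum_range_sum_range_abs_sub m

theorem sum_offDiag_abs_sub_sub_one (e : C ≃ Fin m) :
    ∑ p ∈ (univ : Finset C).offDiag, (|(e p.1 : ℝ) - e p.2| - 1)
      = #(univ : Finset C).offDiag * (((m : ℝ) - 2) / 3) := by
  have hcard : (#(univ : Finset C).offDiag : ℝ) = m ^ 2 - m := by
    rw [offDiag_card, card_univ, Fintype.card_congr e, Fintype.card_fin,
      Nat.cast_sub (Nat.le_mul_self m)]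
    push_cast
    ring
  rw [sum_sub_distrib, sum_const, nsmul_one, hcard]
  linear_combination (1 / 3 : ℝ) * three_mul_sum_offDiag_abs_sub e

theorem sum_offDiag_sum_natAbs_sub_sub_one {n : ℕ} (P : Fin n → C ≃ Fin m) :
    ∑ p ∈ (univ : Finset C).offDiag, ∑ i, ((((P i p.1 : ℤ) - P i p.2).natAbs : ℝ) - 1)
      = ∑ _p ∈ (univ : Finset C).offDiag, n * (((m : ℝ) - 2) / 3) := by
  have hcast (i : Fin n) (p : C × C) :
      (((P i p.1 : ℤ) - P i p.2).natAbs : ℝ) = |(P i p.1 : ℝ) - P i p.2| := by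
    simp [Nat.cast_natAbs]
  rw [sum_comm]
  simp only [hcast, sum_offDiag_abs_sub_sub_one, sum_const, card_univ, Fintype.card_fin,
    nsmul_eq_mul]
  ring

end

theorem exists_pair_swap_clone_le_general
    (C : Type*) [Fintype C] (m n : ℕ)
    (hm : 2 ≤ m) (hC : Fintype.card C = m)
    (P : Fin n → (C ≃ Fin m)) :
    ∃ x y : C, x ≠ y ∧
      (∑ i : Fin n, ((((P i x : ℤ) - (P i y : ℤ)).natAbs : ℝ) - 1)) / n
        ≤ ((m : ℝ) - 2) / 3 := by
  classical
  have hpairs : (univ : Finset C).offDiag.Nonempty := by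
    obtain ⟨x, y, hxy⟩ := Fintype.exists_pair_of_one_lt_card (by omega : 1 < Fintype.card C)
    exact ⟨(x, y), by simpa using hxy⟩
  obtain ⟨⟨x, y⟩, hxy, hle⟩ :=
    exists_le_of_sum_le hpairs (sum_offDiag_sum_natAbs_sub_sub_one P).le
  have hbound_nonneg : (0 : ℝ) ≤ ((m : ℝ) - 2) / 3 := by
    have : (2 : ℝ) ≤ m := by exact_mod_cast hm
    linarith
  -- `div_le_of_le_mul₀` also covers `n = 0`, where the left side is `0 / 0 = 0`.
  exact ⟨x, y, (mem_offDiag.1 hxy).2.2, div_le_of_le_mul₀ n.cast_nonneg hbound_nonneg (by linarith)⟩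

/-- **Existence of a near-clone pair (swap measure).**
In every preference profile over a set `C` of `m ≥ 2` candidates with `n ≥ 1` voters
(voter `i`'s ranking is given by its position function `P i : C ≃ Fin m`),
there exists a pair of distinct candidates `{x,y}` whose swap-clone value
`β_{x,y} = (1/n)·Σ_i (|σ_i(x) − σ_i(y)| − 1)` is at most `(m-2)/3`. -/
theorem exists_pair_swap_clone_le
    (C : Type*) [Fintype C] [DecidableEq C] (m n : ℕ)
    (hm : 2 ≤ m) (hC : Fintype.card C = m) (hn : 1 ≤ n)
    (P : Fin n → (C ≃ Fin m)) :
    ∃ x y : C, x ≠ y ∧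
      (∑ i : Fin n, ((((P i x : ℤ) - (P i y : ℤ)).natAbs : ℝ) - 1)) / n
        ≤ ((m : ℝ) - 2) / 3 :=
  exists_pair_swap_clone_le_general C m n hm hC P
end

section
/- Let α > 0. There is no voting rule f, defined on all preference profiles over nonempty subsets of a fixed three-element candidate set {a,b,c}, such that both: (i) f coincides with the majority rule on two-candidate profiles, i.e., whenever strictly more voters rank u above v in a profile over {u,v}, then f of that profile equals {u}; and (ii) f is independent of α-deletion clones. Equivalently, every voting rule satisfying (i) admits a profile P over {a,b,c} and a pair of α-deletion clones {x,y} in P for which the independence conditions fail for P_{-x}. -/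
open Finset

/-- A ranking (strict total order) of the candidate set `D ⊆ {a,b,c} = Fin 3`, encoded as a
duplicate-free list (best candidate first) whose set of elements is exactly `D`. -/
def Ranking (D : Finset (Fin 3)) : Type := {l : List (Fin 3) // l.Nodup ∧ l.toFinset = D}

/-- The (0-indexed) position of candidate `x` in ranking `r`. -/
def rpos {D : Finset (Fin 3)} (r : Ranking D) (x : Fin 3) : ℕ := r.val.idxOf x

/-- Delete candidate `x` from a ranking. -/
def eraseCand {D : Finset (Fin 3)} (x : Fin 3) (r : Ranking D) : Ranking (D.erase x) :=
  ⟨r.val.erase x, r.2.1.erase x, by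
    ext c
    simp [List.Nodup.mem_erase_iff r.2.1, Finset.mem_erase, ← r.2.2]⟩

/-!
With candidates `a, b, c` = `0, 1, 2`, take `p` voters `a ≻ b ≻ c`, `p` voters `c ≻ b ≻ a` and
one voter `a ≻ c ≻ b`, where `1 / (2p + 1) ≤ α`. The candidates `c, b` are adjacent in every
ballot and `a, b` in all but one, so both pairs are `α`-deletion clones. Deleting `a` leaves `c`
the majority winner over `b`, so by condition (2) for the clones `a, b` neither `a` nor `b` wins.
Deleting `c` leaves `a` the majority winner over `b`, so by condition (1) for the clones `c, b`
the candidate `a` does win.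
-/

abbrev VotingRule : Type := (D : Finset (Fin 3)) → (n : ℕ) → (Fin n → Ranking D) → Finset (Fin 3)

def IsMajorityOnPairs (f : VotingRule) : Prop :=
  ∀ (u v : Fin 3), u ≠ v → ∀ (n : ℕ) (P : Fin n → Ranking {u, v}),
    #{i | rpos (P i) v < rpos (P i) u} < #{i | rpos (P i) u < rpos (P i) v} → f {u, v} n P = {u}

theorem IsMajorityOnPairs.eq_singleton {f : VotingRule} (hf : IsMajorityOnPairs f) {u v : Fin 3}
    (huv : u ≠ v) {D : Finset (Fin 3)} (hD : D = {u, v}) {n : ℕ} (P : Fin n → Ranking D)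
    (hlt : #{i | rpos (P i) v < rpos (P i) u} < #{i | rpos (P i) u < rpos (P i) v}) :
    f D n P = {u} := by
  subst hD
  exact hf u v huv n P hlt

theorem Fin.card_filter_append {α : Type*} {m k : ℕ} (u : Fin m → α) (v : Fin k → α)
    (q : α → Prop) [DecidablePred q] :
    #{i | q (Fin.append u v i)} = #{i | q (u i)} + #{i | q (v i)} := by
  simp only [card_filter, Fin.sum_univ_add, Fin.append_left, Fin.append_right]

def abc : Ranking {0, 1, 2} := ⟨[0, 1, 2], by decide, by decide⟩
def cba : Ranking {0, 1, 2} := ⟨[2, 1, 0], by decide, by decide⟩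
def acb : Ranking {0, 1, 2} := ⟨[0, 2, 1], by decide, by decide⟩

def cloneProfile (p : ℕ) : Fin (p + p + 1) → Ranking {0, 1, 2} :=
  Fin.append (Fin.append (fun _ => abc) fun _ => cba) fun _ => acb

theorem card_filter_cloneProfile (p : ℕ) (q : Ranking {0, 1, 2} → Prop) [DecidablePred q] :
    #{i | q (cloneProfile p i)} =
      (if q abc then p else 0) + (if q cba then p else 0) + (if q acb then 1 else 0) := by
  rw [cloneProfile, Fin.card_filter_append, Fin.card_filter_append]
  simp [Finset.filter_const, apply_ite card]

theorem cloneProfile_card_far_zero_one (p : ℕ) :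
    #{i | 1 < ((rpos (cloneProfile p i) 0 : ℤ) - (rpos (cloneProfile p i) 1 : ℤ)).natAbs} = 1 := by
  rw [card_filter_cloneProfile p fun r => 1 < ((rpos r 0 : ℤ) - (rpos r 1 : ℤ)).natAbs]
  simp [rpos, abc, cba, acb]

theorem cloneProfile_card_far_two_one (p : ℕ) :
    #{i | 1 < ((rpos (cloneProfile p i) 2 : ℤ) - (rpos (cloneProfile p i) 1 : ℤ)).natAbs} = 0 := by
  rw [card_filter_cloneProfile p fun r => 1 < ((rpos r 2 : ℤ) - (rpos r 1 : ℤ)).natAbs]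
  simp [rpos, abc, cba, acb]

theorem IsMajorityOnPairs.cloneProfile_erase_zero {f : VotingRule} (hf : IsMajorityOnPairs f)
    (p : ℕ) : f (({0, 1, 2} : Finset (Fin 3)).erase 0) (p + p + 1)
      (fun i => eraseCand 0 (cloneProfile p i)) = {2} := by
  refine hf.eq_singleton (v := 1) (by decide) (by decide) _ ?_
  rw [card_filter_cloneProfile p fun r => rpos (eraseCand 0 r) 1 < rpos (eraseCand 0 r) 2,
    card_filter_cloneProfile p fun r => rpos (eraseCand 0 r) 2 < rpos (eraseCand 0 r) 1]
  simp [rpos, abc, cba, acb, eraseCand]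

theorem IsMajorityOnPairs.cloneProfile_erase_two {f : VotingRule} (hf : IsMajorityOnPairs f)
    (p : ℕ) : f (({0, 1, 2} : Finset (Fin 3)).erase 2) (p + p + 1)
      (fun i => eraseCand 2 (cloneProfile p i)) = {0} := by
  refine hf.eq_singleton (v := 1) (by decide) (by decide) _ ?_
  rw [card_filter_cloneProfile p fun r => rpos (eraseCand 2 r) 1 < rpos (eraseCand 2 r) 0,
    card_filter_cloneProfile p fun r => rpos (eraseCand 2 r) 0 < rpos (eraseCand 2 r) 1]
  simp [rpos, abc, cba, acb, eraseCand]

/-- **Impossibility of independence of `α`-deletion clones (`α > 0`).**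
There is no voting rule `f`, defined on all preference profiles over nonempty subsets of
the fixed three-element candidate set `Fin 3`, such that (i) `f` coincides with the
majority rule on two-candidate profiles and (ii) `f` is independent of `α`-deletion clones:
for every profile `P` with `n ≥ 1` voters and every pair `x ≠ y` of `α`-deletion clones in `P`,
(1) for all `z ∉ {x,y}`, `z ∈ f(P) ↔ z ∈ f(P₋ₓ)`, and
(2) `f(P) ∩ {x,y} ≠ ∅ ↔ y ∈ f(P₋ₓ)`. -/
theorem no_rule_indep_deletion_clones (α : ℝ) (hα : 0 < α) :
    ¬ ∃ f : (D : Finset (Fin 3)) → (n : ℕ) → (Fin n → Ranking D) → Finset (Fin 3),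
      -- `f` is a voting rule: winners form a nonempty subset of the candidate set
      (∀ (D : Finset (Fin 3)) (n : ℕ) (P : Fin n → Ranking D),
        D.Nonempty → 1 ≤ n → (f D n P).Nonempty ∧ f D n P ⊆ D) ∧
      -- (i) majority rule on two-candidate profiles
      (∀ (u v : Fin 3), u ≠ v → ∀ (n : ℕ) (P : Fin n → Ranking {u, v}),
        (univ.filter fun i => rpos (P i) v < rpos (P i) u).card <
          (univ.filter fun i => rpos (P i) u < rpos (P i) v).card →
        f {u, v} n P = {u}) ∧
      -- (ii) independence of `α`-deletion clones
      (∀ (D : Finset (Fin 3)) (n : ℕ), 1 ≤ n → ∀ (P : Fin n → Ranking D) (x y : Fin 3),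
        x ∈ D → y ∈ D → x ≠ y →
        ((univ.filter fun i =>
            1 < ((rpos (P i) x : ℤ) - (rpos (P i) y : ℤ)).natAbs).card : ℝ) / n ≤ α →
        (∀ z : Fin 3, z ≠ x → z ≠ y →
          (z ∈ f D n P ↔ z ∈ f (D.erase x) n (fun i => eraseCand x (P i)))) ∧
        ((f D n P ∩ {x, y}).Nonempty ↔
          y ∈ f (D.erase x) n (fun i => eraseCand x (P i)))) := by
  rintro ⟨f, -, hMaj : IsMajorityOnPairs f, hClone⟩
  obtain ⟨p, hp⟩ : ∃ p : ℕ, 1 / ((p + p + 1 : ℕ) : ℝ) ≤ α := by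
    obtain ⟨p, hp⟩ := exists_nat_one_div_lt hα
    refine ⟨p, le_trans (one_div_le_one_div_of_le (by positivity) ?_) hp.le⟩
    exact_mod_cast (by omega : p + 1 ≤ p + p + 1)
  have hab := (hClone {0, 1, 2} _ (by omega) (cloneProfile p) 0 1 (by decide) (by decide)
    (by decide) (by rwa [cloneProfile_card_far_zero_one, Nat.cast_one])).2
  have hcb := (hClone {0, 1, 2} _ (by omega) (cloneProfile p) 2 1 (by decide) (by decide)
    (by decide) (by rw [cloneProfile_card_far_two_one]; simpa using hα.le)).1 0 (by decide)
    (by decide)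
  rw [hMaj.cloneProfile_erase_zero] at hab
  rw [hMaj.cloneProfile_erase_two] at hcb
  have ha_wins : (0 : Fin 3) ∈ f {0, 1, 2} (p + p + 1) (cloneProfile p) :=
    hcb.mpr (mem_singleton_self 0)
  exact absurd (hab.mp ⟨0, mem_inter.mpr ⟨ha_wins, by simp⟩⟩) (by decide)
end

section
/- Let P be a preference profile over three candidates {a,b,c} with n ≥ 1 voters. Suppose that the number of voters who rank c first is at most n/3, and that the number of voters i with |σ_i(a) − σ_i(b)| > 1 (i.e., who rank c strictly between a and b) is at most n/3. Then |{i : a ≻_i c}| ≥ n/2 or |{i : b ≻_i c}| ≥ n/2. -/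
open Finset

/-- **Key lemma for weak independence of `(1/3)`-deletion clones under IRV (`m = 3`).**
Let `P` be a preference profile over three candidates `{a,b,c}` with `n ≥ 1` voters,
where voter `i`'s ranking is its position function `P i : Equiv.Perm (Fin 3)`
(position `0` = top). If the number of voters ranking `c` first is at most `n/3`,
and the number of voters `i` with `|σ_i(a) − σ_i(b)| > 1` is at most `n/3`,
then at least half of the voters prefer `a` to `c`, or at least half prefer `b` to `c`. -/
theorem irv_third_deletion_clones_key_lemma
    (n : ℕ) (hn : 1 ≤ n) (P : Fin n → Equiv.Perm (Fin 3))
    (a b c : Fin 3) (hab : a ≠ b) (hac : a ≠ c) (hbc : b ≠ c)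
    (hfirst : ((univ.filter fun i : Fin n => P i c = 0).card : ℝ) ≤ (n : ℝ) / 3)
    (hclones : ((univ.filter fun i : Fin n =>
        1 < ((P i a : ℤ) - (P i b : ℤ)).natAbs).card : ℝ) ≤ (n : ℝ) / 3) :
    (n : ℝ) / 2 ≤ ((univ.filter fun i : Fin n => P i a < P i c).card : ℝ) ∨
    (n : ℝ) / 2 ≤ ((univ.filter fun i : Fin n => P i b < P i c).card : ℝ) := by
  have key : ∀ i : Fin n,
      2 ≤ (if P i a < P i c then 1 else 0) + (if P i b < P i c then 1 else 0)
        + 2 * (if P i c = 0 then 1 else 0)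
        + (if 1 < ((P i a : ℤ) - (P i b : ℤ)).natAbs then 1 else 0) := by
    intro i
    have h1 : (P i a).val ≠ (P i b).val := fun h => hab ((P i).injective (Fin.ext h))
    have h2 : (P i a).val ≠ (P i c).val := fun h => hac ((P i).injective (Fin.ext h))
    have h3 : (P i b).val ≠ (P i c).val := fun h => hbc ((P i).injective (Fin.ext h))
    have l1 : (P i a).val < 3 := (P i a).isLt
    have l2 : (P i b).val < 3 := (P i b).isLt
    have l3 : (P i c).val < 3 := (P i c).isLt
    simp only [Fin.lt_def, Fin.ext_iff, Fin.val_zero]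
    split_ifs <;> omega
  have hsum : 2 * n ≤ (univ.filter fun i : Fin n => P i a < P i c).card
      + (univ.filter fun i : Fin n => P i b < P i c).card
      + 2 * (univ.filter fun i : Fin n => P i c = 0).card
      + (univ.filter fun i : Fin n =>
          1 < ((P i a : ℤ) - (P i b : ℤ)).natAbs).card := by
    simp only [Finset.card_filter]
    calc 2 * n = ∑ _i : Fin n, 2 := by simp [mul_comm]
      _ ≤ ∑ i : Fin n, ((if P i a < P i c then 1 else 0)
          + (if P i b < P i c then 1 else 0)
          + 2 * (if P i c = 0 then 1 else 0)
          + (if 1 < ((P i a : ℤ) - (P i b : ℤ)).natAbs then 1 else 0)) :=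
        Finset.sum_le_sum fun i _ => key i
      _ = _ := by
        rw [Finset.sum_add_distrib, Finset.sum_add_distrib, Finset.sum_add_distrib,
          Finset.mul_sum]
  have hsum' : (2 * n : ℝ) ≤ ((univ.filter fun i : Fin n => P i a < P i c).card : ℝ)
      + ((univ.filter fun i : Fin n => P i b < P i c).card : ℝ)
      + 2 * ((univ.filter fun i : Fin n => P i c = 0).card : ℝ)
      + ((univ.filter fun i : Fin n =>
          1 < ((P i a : ℤ) - (P i b : ℤ)).natAbs).card : ℝ) := by
    exact_mod_cast hsum
  by_contra h
  push_neg at h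
  obtain ⟨h1, h2⟩ := h
  linarith
end
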